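/- Let u : B_ρ -> R be a C^2 function on the Euclidean ball B_ρ of radius ρ in R^{n-1}, whose graph satisfies an interior and exterior touching ball condition of radius ρ in R^n, with u(O)=0 and ∇u(O)=0. Then for every x in B_ρ one has |u(x)| <= ρ - sqrt(ρ^2 - |x|^2) and |∇u(x)| <= |x|/sqrt(ρ^2 - |x|^2). -/

import Mathlib

open Metric

variable {m : ℕ}

/-- The graph point `(x, u x)` in `ℝ^m × ℝ` with the Euclidean (`ℓ²`) norm. -/
noncomputable def graphPt (u : EuclideanSpace ℝ (Fin m) → ℝ)
    (x : EuclideanSpace ℝ (Fin m)) : WithLp 2 (EuclideanSpace ℝ (Fin m) × ℝ) :=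
  (WithLp.equiv 2 (EuclideanSpace ℝ (Fin m) × ℝ)).symm (x, u x)

/-- The (Euclidean) unit normal to the graph of `u` at `(x, u x)`. -/
noncomputable def graphNormal (u : EuclideanSpace ℝ (Fin m) → ℝ)
    (x : EuclideanSpace ℝ (Fin m)) : WithLp 2 (EuclideanSpace ℝ (Fin m) × ℝ) :=
  ((1 + ‖gradient u x‖ ^ 2) ^ (-(1:ℝ)/2)) •
    (WithLp.equiv 2 (EuclideanSpace ℝ (Fin m) × ℝ)).symm (-(gradient u x), 1)

/-!
The balls tangent at the origin are centered at `(0, ±ρ)`. The graph is connected, passes through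
the origin and cannot enter them, so it stays between them: this is the height bound. If the
gradient at `x` were steeper than `‖x‖ / √(ρ² - ‖x‖²)`, one of the two balls tangent at
`(x, u x)` would overlap the opposite ball tangent at the origin, and the graph, squeezed
between two overlapping balls, would have no room left over the midpoint of their centers.
-/

section Trapping

variable {E : Type*} [NormedAddCommGroup E] {u : E → ℝ} {ρ : ℝ}

lemma sqrt_sq_sub_sq_le_abs {r s t : ℝ} (h : r ^ 2 ≤ s ^ 2 + t ^ 2) :
    √(r ^ 2 - s ^ 2) ≤ |t| := by
  rw [← Real.sqrt_sq_eq_abs]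
  exact Real.sqrt_le_sqrt (by linarith)

/-- Over the shadow of the ball the graph cannot reach the level `b` without entering the ball,
so by connectedness it stays on the side where it starts. -/
lemma add_sqrt_le_of_avoids_ball {K : Set E} (hK : IsPreconnected K) (hu : ContinuousOn u K)
    {a : E} {b : ℝ} (hKa : K ⊆ ball a ρ)
    (havoid : ∀ z ∈ K, ρ ^ 2 ≤ ‖z - a‖ ^ 2 + (u z - b) ^ 2)
    {x : E} (hx : x ∈ K) (hbx : b ≤ u x) {z : E} (hz : z ∈ K) :
    b + √(ρ ^ 2 - ‖z - a‖ ^ 2) ≤ u z := by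
  have hgap_pos : ∀ w ∈ K, 0 < √(ρ ^ 2 - ‖w - a‖ ^ 2) := fun w hw => by
    have hwa : ‖w - a‖ < ρ := mem_ball_iff_norm.1 (hKa hw)
    exact Real.sqrt_pos.2 (by nlinarith [norm_nonneg (w - a)])
  have hgap : ∀ w ∈ K, √(ρ ^ 2 - ‖w - a‖ ^ 2) ≤ |u w - b| :=
    fun w hw => sqrt_sq_sub_sq_le_abs (havoid w hw)
  have hbz : b ≤ u z := by
    by_contra! hzb
    obtain ⟨w, hw, hwb⟩ := hK.intermediate_value hz hx hu ⟨hzb.le, hbx⟩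
    have := hgap w hw
    rw [hwb, sub_self, abs_zero] at this
    linarith [hgap_pos w hw]
  have := hgap z hz
  rw [abs_of_nonneg (sub_nonneg.2 hbz)] at this
  linarith

variable [NormedSpace ℝ E]

lemma abs_le_of_avoids_balls_at_origin (hu : ContinuousOn u (ball 0 ρ)) (hu0 : u 0 = 0)
    (hup : ∀ z ∈ ball (0 : E) ρ, ρ ^ 2 ≤ ‖z‖ ^ 2 + (u z - ρ) ^ 2)
    (hdown : ∀ z ∈ ball (0 : E) ρ, ρ ^ 2 ≤ ‖z‖ ^ 2 + (u z + ρ) ^ 2) :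
    ∀ z ∈ ball (0 : E) ρ, |u z| ≤ ρ - √(ρ ^ 2 - ‖z‖ ^ 2) := by
  intro z hz
  have hρ : 0 < ρ := pos_of_mem_ball hz
  have h0 : (0 : E) ∈ ball 0 ρ := mem_ball_self hρ
  have hK : IsPreconnected (ball (0 : E) ρ) := (convex_ball 0 ρ).isPreconnected
  have hlow := add_sqrt_le_of_avoids_ball (b := -ρ) hK hu subset_rfl
    (fun w hw => by rw [sub_zero, sub_neg_eq_add]; exact hdown w hw) h0 (by linarith) hz
  have hhigh := add_sqrt_le_of_avoids_ball (u := fun w => -u w) (b := -ρ) hK hu.neg subset_rfl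
    (fun w hw => by
      rw [sub_zero]; linarith [hup w hw, show (-u w - -ρ) ^ 2 = (u w - ρ) ^ 2 by ring])
    h0 (by simp [hu0, hρ.le]) hz
  simp only [sub_zero] at hlow hhigh
  rw [abs_le]
  constructor <;> linarith

/-- Over `a / 2` the graph has to lie above the ball centered at `(a, b)` and below the one
centered at `(0, ρ)`, which is impossible if these overlap at the midpoint of their centers. -/
lemma four_mul_sq_le_of_between_balls (hu : ContinuousOn u (ball 0 ρ))
    (hbelow : ∀ z ∈ ball (0 : E) ρ, u z ≤ ρ - √(ρ ^ 2 - ‖z‖ ^ 2)) {a : E} {b : ℝ}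
    (havoid : ∀ z ∈ ball (0 : E) ρ, ρ ^ 2 ≤ ‖z - a‖ ^ 2 + (u z - b) ^ 2)
    {x : E} (hx : x ∈ ball 0 ρ) (hxa : ‖x - a‖ < ρ) (hbx : b ≤ u x) :
    4 * ρ ^ 2 ≤ ‖a‖ ^ 2 + (ρ - b) ^ 2 := by
  by_contra! hclose
  have hρ : 0 < ρ := pos_of_mem_ball hx
  set y : E := (2⁻¹ : ℝ) • a
  have hy : ‖y‖ = ‖a‖ / 2 := by
    simp [y, norm_smul, div_eq_inv_mul]
  have hya : ‖y - a‖ = ‖a‖ / 2 := by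
    rw [show y - a = (-2⁻¹ : ℝ) • a by simp only [y]; module, norm_smul]
    simp [div_eq_inv_mul]
  have ha : ‖a‖ / 2 < ρ := by nlinarith [norm_nonneg a]
  have hK : IsPreconnected (ball (0 : E) ρ ∩ ball a ρ) :=
    ((convex_ball 0 ρ).inter (convex_ball a ρ)).isPreconnected
  have hyK : y ∈ ball (0 : E) ρ ∩ ball a ρ := by
    rw [Set.mem_inter_iff, mem_ball_zero_iff, mem_ball_iff_norm, hy, hya]
    exact ⟨ha, ha⟩
  have habove := add_sqrt_le_of_avoids_ball hK (hu.mono Set.inter_subset_left)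
    Set.inter_subset_right (fun z hz => havoid z hz.1) ⟨hx, mem_ball_iff_norm.2 hxa⟩ hbx hyK
  have hbelow_y := hbelow y hyK.1
  rw [hya] at habove
  rw [hy] at hbelow_y
  have hs := Real.sq_sqrt (show 0 ≤ ρ ^ 2 - (‖a‖ / 2) ^ 2 by nlinarith [norm_nonneg a])
  nlinarith [Real.sqrt_nonneg (ρ ^ 2 - (‖a‖ / 2) ^ 2)]

end Trapping

section Gradient

variable {E : Type*} [NormedAddCommGroup E] [InnerProductSpace ℝ E] {u : E → ℝ} {ρ : ℝ}

/-- `(x ∓ P • g, u x ± P)` are the centers of the balls of radius `ρ` tangent at `(x, u x)` to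
the graph of slope `g`. If `g` were steeper, one of them would be closer than `2ρ` to the center
`(0, ∓ρ)` of the opposite ball tangent at the origin. -/
lemma norm_le_div_sqrt_of_touching_balls (hu : ContinuousOn u (ball 0 ρ))
    (hheight : ∀ z ∈ ball (0 : E) ρ, |u z| ≤ ρ - √(ρ ^ 2 - ‖z‖ ^ 2))
    {x g : E} (hx : x ∈ ball 0 ρ) {P : ℝ} (hP : 0 < P) (hPg : P ^ 2 * (1 + ‖g‖ ^ 2) = ρ ^ 2)
    (hup : ∀ z ∈ ball (0 : E) ρ, ρ ^ 2 ≤ ‖z - (x - P • g)‖ ^ 2 + (u z - (u x + P)) ^ 2)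
    (hdown : ∀ z ∈ ball (0 : E) ρ, ρ ^ 2 ≤ ‖z - (x + P • g)‖ ^ 2 + (u z - (u x - P)) ^ 2) :
    ‖g‖ ≤ ‖x‖ / √(ρ ^ 2 - ‖x‖ ^ 2) := by
  have hρ : 0 < ρ := pos_of_mem_ball hx
  have hxρ : ‖x‖ < ρ := mem_ball_zero_iff.1 hx
  set d := √(ρ ^ 2 - ‖x‖ ^ 2)
  have hd2 : d ^ 2 = ρ ^ 2 - ‖x‖ ^ 2 := Real.sq_sqrt (by nlinarith [norm_nonneg x])
  have hd : 0 < d := Real.sqrt_pos.2 (by nlinarith [norm_nonneg x])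
  rw [le_div_iff₀ hd]
  by_contra! hsteep
  have hPd : P < d := by
    refine lt_of_pow_lt_pow_left₀ 2 hd.le ?_
    nlinarith [norm_nonneg x, norm_nonneg g]
  have hPg_norm : ‖P • g‖ ^ 2 = ρ ^ 2 - P ^ 2 := by
    rw [norm_smul, Real.norm_of_nonneg hP.le]; linarith
  have hPg_lt : ‖P • g‖ < ρ := by nlinarith [norm_nonneg (P • g)]
  have hux : |u x| ≤ ρ - d := hheight x hx
  have hux2 : u x ^ 2 ≤ (ρ - d) ^ 2 := by
    rw [← sq_abs]; exact pow_le_pow_left₀ (abs_nonneg _) hux 2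
  have hsum : (‖x + P • g‖ ^ 2 + (ρ - (u x - P)) ^ 2)
      + (‖x - P • g‖ ^ 2 + (ρ - (-u x - P)) ^ 2) < 2 * (4 * ρ ^ 2) := by
    nlinarith [parallelogram_law_with_norm ℝ x (P • g)]
  have hbelow : ∀ z ∈ ball (0 : E) ρ, u z ≤ ρ - √(ρ ^ 2 - ‖z‖ ^ 2) :=
    fun z hz => (abs_le.1 (hheight z hz)).2
  have hbelow' : ∀ z ∈ ball (0 : E) ρ, -u z ≤ ρ - √(ρ ^ 2 - ‖z‖ ^ 2) :=
    fun z hz => by linarith [(abs_le.1 (hheight z hz)).1]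
  have hlower := four_mul_sq_le_of_between_balls hu hbelow hdown hx
    (by rwa [sub_add_cancel_left, norm_neg]) (by linarith)
  have hupper := four_mul_sq_le_of_between_balls (u := fun z => -u z)
    (a := x - P • g) (b := -u x - P) hu.neg hbelow'
    (fun z hz => by
      linarith [hup z hz, show (-u z - (-u x - P)) ^ 2 = (u z - (u x + P)) ^ 2 by ring])
    hx (by rwa [sub_sub_cancel]) (by linarith)
  linarith

end Gradient

section Graph

variable (u : EuclideanSpace ℝ (Fin m) → ℝ)

lemma rpow_neg_half_eq_inv_sqrt {s : ℝ} (hs : 0 ≤ s) : s ^ (-(1 : ℝ) / 2) = (√s)⁻¹ := by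
  rw [Real.sqrt_eq_rpow, ← Real.rpow_neg hs, neg_div]

lemma dist_graphPt_toLp_sq (y a : EuclideanSpace ℝ (Fin m)) (b : ℝ) :
    dist (graphPt u y) (WithLp.toLp 2 (a, b)) ^ 2 = ‖y - a‖ ^ 2 + (u y - b) ^ 2 := by
  rw [dist_eq_norm, WithLp.prod_norm_sq_eq_of_L2]
  simp [graphPt, sq_abs]

lemma graphPt_add_smul_graphNormal (x : EuclideanSpace ℝ (Fin m)) (ρ : ℝ) :
    graphPt u x + ρ • graphNormal u x = WithLp.toLp 2
      (x - (ρ / √(1 + ‖gradient u x‖ ^ 2)) • gradient u x,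
        u x + ρ / √(1 + ‖gradient u x‖ ^ 2)) := by
  rw [graphNormal, rpow_neg_half_eq_inv_sqrt (by positivity), WithLp.ext_iff]
  ext <;> simp [graphPt, smul_smul, div_eq_mul_inv, sub_eq_add_neg]

lemma graphPt_sub_smul_graphNormal (x : EuclideanSpace ℝ (Fin m)) (ρ : ℝ) :
    graphPt u x - ρ • graphNormal u x = WithLp.toLp 2
      (x + (ρ / √(1 + ‖gradient u x‖ ^ 2)) • gradient u x,
        u x - ρ / √(1 + ‖gradient u x‖ ^ 2)) := by
  rw [graphNormal, rpow_neg_half_eq_inv_sqrt (by positivity), WithLp.ext_iff]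
  ext <;> simp [graphPt, smul_smul, div_eq_mul_inv, sub_eq_add_neg]

variable {u}

lemma sq_le_of_ball_inter_graph_eq_empty {ρ : ℝ} {a : EuclideanSpace ℝ (Fin m)} {b : ℝ}
    (h : ball (WithLp.toLp 2 (a, b)) ρ ∩
      {q | ∃ y ∈ ball (0 : EuclideanSpace ℝ (Fin m)) ρ, q = graphPt u y} = ∅)
    {y : EuclideanSpace ℝ (Fin m)} (hy : y ∈ ball 0 ρ) :
    ρ ^ 2 ≤ ‖y - a‖ ^ 2 + (u y - b) ^ 2 := by
  have hdist : ρ ≤ dist (graphPt u y) (WithLp.toLp 2 (a, b)) :=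
    not_lt.1 fun hlt => Set.eq_empty_iff_forall_notMem.1 h _ ⟨hlt, y, hy, rfl⟩
  rw [← dist_graphPt_toLp_sq]
  exact pow_le_pow_left₀ (pos_of_mem_ball hy).le hdist 2

lemma sq_le_of_touching_balls {ρ : ℝ} {x : EuclideanSpace ℝ (Fin m)}
    (htouch : (ball (graphPt u x + ρ • graphNormal u x) ρ ∩
          {p | ∃ y ∈ ball (0 : EuclideanSpace ℝ (Fin m)) ρ, p = graphPt u y} = ∅) ∧
      (ball (graphPt u x - ρ • graphNormal u x) ρ ∩
          {p | ∃ y ∈ ball (0 : EuclideanSpace ℝ (Fin m)) ρ, p = graphPt u y} = ∅))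
    {y : EuclideanSpace ℝ (Fin m)} (hy : y ∈ ball 0 ρ) :
    let P := ρ / √(1 + ‖gradient u x‖ ^ 2)
    ρ ^ 2 ≤ ‖y - (x - P • gradient u x)‖ ^ 2 + (u y - (u x + P)) ^ 2 ∧
      ρ ^ 2 ≤ ‖y - (x + P • gradient u x)‖ ^ 2 + (u y - (u x - P)) ^ 2 := by
  rw [graphPt_add_smul_graphNormal, graphPt_sub_smul_graphNormal] at htouch
  exact ⟨sq_le_of_ball_inter_graph_eq_empty htouch.1 hy,
    sq_le_of_ball_inter_graph_eq_empty htouch.2 hy⟩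

end Graph

theorem graph_touching_ball_estimates_general (m : ℕ) (ρ : ℝ)
    (u : EuclideanSpace ℝ (Fin m) → ℝ)
    (hu : ContDiffOn ℝ 2 u (ball (0 : EuclideanSpace ℝ (Fin m)) ρ))
    (hu0 : u 0 = 0) (hgrad0 : gradient u 0 = 0)
    (htouch : ∀ x ∈ ball (0 : EuclideanSpace ℝ (Fin m)) ρ,
      (ball (graphPt u x + ρ • graphNormal u x) ρ ∩
          {p | ∃ y ∈ ball (0 : EuclideanSpace ℝ (Fin m)) ρ, p = graphPt u y} = ∅) ∧
      (ball (graphPt u x - ρ • graphNormal u x) ρ ∩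
          {p | ∃ y ∈ ball (0 : EuclideanSpace ℝ (Fin m)) ρ, p = graphPt u y} = ∅)) :
    ∀ x ∈ ball (0 : EuclideanSpace ℝ (Fin m)) ρ,
      |u x| ≤ ρ - Real.sqrt (ρ ^ 2 - ‖x‖ ^ 2) ∧
      ‖gradient u x‖ ≤ ‖x‖ / Real.sqrt (ρ ^ 2 - ‖x‖ ^ 2) := by
  have hcont := hu.continuousOn
  have havoid_origin : ∀ z ∈ ball (0 : EuclideanSpace ℝ (Fin m)) ρ,
      ρ ^ 2 ≤ ‖z‖ ^ 2 + (u z - ρ) ^ 2 ∧ ρ ^ 2 ≤ ‖z‖ ^ 2 + (u z + ρ) ^ 2 := fun z hz => by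
    simpa [hu0, hgrad0] using
      sq_le_of_touching_balls (htouch 0 (mem_ball_self (pos_of_mem_ball hz))) hz
  have hheight := abs_le_of_avoids_balls_at_origin hcont hu0
    (fun z hz => (havoid_origin z hz).1) (fun z hz => (havoid_origin z hz).2)
  intro x hx
  have hρ : 0 < ρ := pos_of_mem_ball hx
  have hsqrt : 0 < √(1 + ‖gradient u x‖ ^ 2) := Real.sqrt_pos.2 (by positivity)
  refine ⟨hheight x hx, norm_le_div_sqrt_of_touching_balls hcont hheight hx (div_pos hρ hsqrt) ?_
    (fun z hz => (sq_le_of_touching_balls (htouch x hx) hz).1)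
    (fun z hz => (sq_le_of_touching_balls (htouch x hx) hz).2)⟩
  rw [div_pow, Real.sq_sqrt (by positivity)]
  field_simp

/-- If the graph of a `C²` function `u : B_ρ → ℝ` with `u(O)=0`,
`∇u(O)=0` satisfies an interior and exterior touching ball condition of radius `ρ`
(the open balls of radius `ρ` centered at `graphPt ± ρ • normal` miss the graph),
then `|u(x)| ≤ ρ - √(ρ² - |x|²)` and `|∇u(x)| ≤ |x|/√(ρ² - |x|²)` on `B_ρ`. -/
theorem graph_touching_ball_estimates (m : ℕ) (ρ : ℝ) (hρ : 0 < ρ)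
    (u : EuclideanSpace ℝ (Fin m) → ℝ)
    (hu : ContDiffOn ℝ 2 u (ball (0 : EuclideanSpace ℝ (Fin m)) ρ))
    (hu0 : u 0 = 0) (hgrad0 : gradient u 0 = 0)
    (htouch : ∀ x ∈ ball (0 : EuclideanSpace ℝ (Fin m)) ρ,
      (ball (graphPt u x + ρ • graphNormal u x) ρ ∩
          {p | ∃ y ∈ ball (0 : EuclideanSpace ℝ (Fin m)) ρ, p = graphPt u y} = ∅) ∧
      (ball (graphPt u x - ρ • graphNormal u x) ρ ∩
          {p | ∃ y ∈ ball (0 : EuclideanSpace ℝ (Fin m)) ρ, p = graphPt u y} = ∅)) :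
    ∀ x ∈ ball (0 : EuclideanSpace ℝ (Fin m)) ρ,
      |u x| ≤ ρ - Real.sqrt (ρ ^ 2 - ‖x‖ ^ 2) ∧
      ‖gradient u x‖ ≤ ‖x‖ / Real.sqrt (ρ ^ 2 - ‖x‖ ^ 2) :=
  graph_touching_ball_estimates_general m ρ u hu hu0 hgrad0 htouch
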